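/- Assume P is the identity matrix and X_{i,j} = 0 whenever dist(i,j) > R, and let i, j ∈ L and t ∈ ℝ satisfy e·τ < 2·d_{i,j}. Then, with B = (eτ/(2d_{i,j}))^{2d_{i,j}} / (√(d_{i,j}) · (1 − (eτ/(2d_{i,j}))²)), one has √‖X‖·|C^{xx}_{i,j}(t)| ≤ B, |C^{xp}_{i,j}(t)| ≤ B, and |C^{px}_{i,j}(t)| ≤ B. -/

import Mathlib

/-- The ℓ²→ℓ² operator norm of a real matrix. -/
noncomputable def l2OpNorm {V : Type*} [Fintype V] [DecidableEq V] (M : Matrix V V ℝ) : ℝ :=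
  ‖Matrix.toEuclideanCLM (𝕜 := ℝ) M‖

/-- For `P = 𝟙`: `C^{xx}_{i,j}(t) = ∑_{n≥0} (−1)^n t^{2n+1} (X^n)_{i,j}/(2n+1)!`. -/
noncomputable def Cxx {V : Type*} [Fintype V] [DecidableEq V]
    (X : Matrix V V ℝ) (i j : V) (t : ℝ) : ℝ :=
  ∑' n : ℕ, (-1 : ℝ) ^ n * t ^ (2 * n + 1) * ((X ^ n) i j) / (Nat.factorial (2 * n + 1))

/-- For `P = 𝟙`: `C^{xp}_{i,j}(t) = −∑_{n≥0} (−1)^n t^{2n} (X^n)_{i,j}/(2n)!`. -/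
noncomputable def Cxp {V : Type*} [Fintype V] [DecidableEq V]
    (X : Matrix V V ℝ) (i j : V) (t : ℝ) : ℝ :=
  -∑' n : ℕ, (-1 : ℝ) ^ n * t ^ (2 * n) * ((X ^ n) i j) / (Nat.factorial (2 * n))

/-- For `P = 𝟙`: `C^{px}_{i,j}(t) = ∑_{n≥0} (−1)^n t^{2n} (X^n)_{i,j}/(2n)!`. -/
noncomputable def Cpx {V : Type*} [Fintype V] [DecidableEq V]
    (X : Matrix V V ℝ) (i j : V) (t : ℝ) : ℝ :=
  ∑' n : ℕ, (-1 : ℝ) ^ n * t ^ (2 * n) * ((X ^ n) i j) / (Nat.factorial (2 * n))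

/-!
Locality of `X` makes `(X ^ n) i j` vanish for `n < d`, so only the tail `n ≥ ⌈d⌉` of each
series survives. There `|(X ^ n) i j| ≤ ‖X‖ ^ n` and Stirling's bound `k! ≥ √k (k/e)^k` make the
`n`-th term (scaled by `√‖X‖` in the odd case) at most `((eτ/(2d))²)^n / √d`, and summing this
geometric tail gives `B`.
-/

section

open Nat Real

variable {V : Type*} [Fintype V] [DecidableEq V]

theorem l2OpNorm_nonneg (M : Matrix V V ℝ) : 0 ≤ l2OpNorm M :=
  norm_nonneg _

theorem abs_apply_le_l2OpNorm (M : Matrix V V ℝ) (i j : V) : |M i j| ≤ l2OpNorm M := by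
  set T := Matrix.toEuclideanCLM (𝕜 := ℝ) M
  calc |M i j| = ‖T (WithLp.toLp 2 (Pi.single j 1)) i‖ := by
        rw [Matrix.toEuclideanCLM_toLp]; simp
    _ ≤ ‖T (WithLp.toLp 2 (Pi.single j 1))‖ := PiLp.norm_apply_le _ _
    _ ≤ ‖T‖ := by grw [T.le_opNorm]; simp
    _ = l2OpNorm M := rfl

theorem abs_pow_apply_le (M : Matrix V V ℝ) (n : ℕ) (i j : V) :
    |(M ^ n) i j| ≤ l2OpNorm M ^ n := by
  have : Nonempty V := ⟨i⟩
  refine (abs_apply_le_l2OpNorm _ i j).trans ?_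
  rw [l2OpNorm, map_pow]
  exact norm_pow_le _ n

theorem abs_sqrt_pow_mul_coeff_le (X : Matrix V V ℝ) (i j : V) (t : ℝ) (e n : ℕ) :
    |√(l2OpNorm X) ^ e * ((-1) ^ n * t ^ (2 * n + e) * (X ^ n) i j / (2 * n + e)!)| ≤
      (√(l2OpNorm X) * |t|) ^ (2 * n + e) / (2 * n + e)! := by
  have hentry : |(X ^ n) i j| ≤ √(l2OpNorm X) ^ (2 * n) := by
    rw [pow_mul, sq_sqrt (l2OpNorm_nonneg X)]
    exact abs_pow_apply_le X n i j
  calc _ = √(l2OpNorm X) ^ e * |t| ^ (2 * n + e) * |(X ^ n) i j| / (2 * n + e)! := by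
        simp [abs_mul, abs_div, mul_div_assoc, mul_assoc, abs_of_nonneg (sqrt_nonneg _)]
    _ ≤ √(l2OpNorm X) ^ e * |t| ^ (2 * n + e) * √(l2OpNorm X) ^ (2 * n) / (2 * n + e)! := by
        gcongr
    _ = (√(l2OpNorm X) * |t|) ^ (2 * n + e) / (2 * n + e)! := by ring

theorem SimpleGraph.Connected.pow_apply_eq_zero_of_mul_lt_dist {α : Type*} [Semiring α]
    {G : SimpleGraph V} (hG : G.Connected) {R : ℕ} {X : Matrix V V α}
    (hX : ∀ i j, R < G.dist i j → X i j = 0) (n : ℕ) {i j : V}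
    (h : n * R < G.dist i j) : (X ^ n) i j = 0 := by
  induction n generalizing j with
  | zero =>
    have hij : i ≠ j := by rintro rfl; simp at h
    simp [Matrix.one_apply_ne hij]
  | succ n ih =>
    rw [pow_succ, Matrix.mul_apply]
    refine Finset.sum_eq_zero fun k _ => ?_
    by_cases hk : n * R < G.dist i k
    · rw [ih hk, zero_mul]
    · -- `dist i k ≤ n * R` forces `R < dist k j` by the triangle inequality
      have htri := hG.dist_triangle (u := i) (v := k) (w := j)
      rw [hX k j (by rw [add_mul] at h; omega), mul_zero]

theorem pow_div_factorial_le {x D : ℝ} (hx : 0 ≤ x) (hD : 0 < D) {k : ℕ} (hDk : D ≤ k) :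
    x ^ k / k ! ≤ (exp 1 * x / D) ^ k / √D := by
  have hfac : √D * (D / exp 1) ^ k ≤ k ! := by
    calc √D * (D / exp 1) ^ k ≤ √(2 * π * k) * (k / exp 1) ^ k := by
          gcongr
          nlinarith [pi_gt_three]
      _ ≤ k ! := Stirling.le_factorial_stirling k
  calc x ^ k / k ! ≤ x ^ k / (√D * (D / exp 1) ^ k) := by gcongr
    _ = (exp 1 * x / D) ^ k / √D := by
      rw [div_pow, div_pow, mul_pow]; field_simp

theorem pow_div_factorial_le_geometric {x d : ℝ} (hx : 0 ≤ x) (hd : 0 < d)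
    (hxd : exp 1 * x ≤ 2 * d) {n k : ℕ} (hn : d ≤ n) (hk : 2 * n ≤ k) :
    x ^ k / k ! ≤ 1 / √d * ((exp 1 * x / (2 * d)) ^ 2) ^ n := by
  have hr0 : 0 ≤ exp 1 * x / (2 * d) := by positivity
  have hr1 : exp 1 * x / (2 * d) ≤ 1 := (div_le_one (by positivity)).mpr hxd
  have hk' : (2 * n : ℝ) ≤ k := by exact_mod_cast hk
  calc x ^ k / k ! ≤ (exp 1 * x / (2 * d)) ^ k / √(2 * d) :=
        pow_div_factorial_le hx (by positivity) (by linarith)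
    _ ≤ (exp 1 * x / (2 * d)) ^ (2 * n) / √d :=
        div_le_div₀ (by positivity) (pow_le_pow_of_le_one hr0 hr1 hk) (by positivity)
          (sqrt_le_sqrt (by linarith))
    _ = 1 / √d * ((exp 1 * x / (2 * d)) ^ 2) ^ n := by rw [← pow_mul]; ring

theorem abs_tsum_le_of_abs_le_geometric {f : ℕ → ℝ} {m : ℕ} {C q : ℝ} (hq0 : 0 ≤ q)
    (hq1 : q < 1) (hzero : ∀ n < m, f n = 0) (hbound : ∀ n, m ≤ n → |f n| ≤ C * q ^ n) :
    |∑' n, f n| ≤ C * q ^ m / (1 - q) := by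
  have hgeom : HasSum (fun n => C * q ^ m * q ^ n) (C * q ^ m / (1 - q)) := by
    simpa [div_eq_mul_inv] using (hasSum_geometric_of_lt_one hq0 hq1).mul_left (C * q ^ m)
  have htail : ∀ n, ‖f (n + m)‖ ≤ C * q ^ m * q ^ n := fun n => by
    simpa [pow_add, mul_assoc, mul_comm, mul_left_comm] using hbound (n + m) (by omega)
  have hsum : Summable f :=
    (summable_nat_add_iff m).mp (hgeom.summable.of_norm_bounded htail)
  rw [← hsum.sum_add_tsum_nat_add m, Finset.sum_eq_zero fun n hn => hzero n (by simpa using hn),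
    zero_add]
  exact tsum_of_norm_bounded hgeom htail

theorem pow_ceil_le_rpow {r d : ℝ} (hr0 : 0 ≤ r) (hr1 : r ≤ 1) (hd : 0 ≤ d) :
    (r ^ 2) ^ ⌈d⌉₊ ≤ r ^ (2 * d) := by
  rw [← pow_mul, ← Real.rpow_natCast]
  exact Real.rpow_le_rpow_of_exponent_ge' hr0 hr1 (by positivity)
    (by push_cast; linarith [Nat.le_ceil d])

noncomputable def causalConeBound (τ d : ℝ) : ℝ :=
  (Real.exp 1 * τ / (2 * d)) ^ (2 * d) / (√d * (1 - (Real.exp 1 * τ / (2 * d)) ^ 2))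

theorem abs_tsum_le_causalConeBound {f : ℕ → ℝ} {τ d : ℝ} (hτ : 0 ≤ τ)
    (hcone : exp 1 * τ < 2 * d) (e : ℕ) (hzero : ∀ n : ℕ, n < d → f n = 0)
    (hf : ∀ n, |f n| ≤ τ ^ (2 * n + e) / (2 * n + e)!) :
    |∑' n, f n| ≤ causalConeBound τ d := by
  have hd : 0 < d := by nlinarith [exp_pos 1]
  set r := exp 1 * τ / (2 * d)
  have hr0 : 0 ≤ r := by positivity
  have hr1 : r < 1 := (div_lt_one (by positivity)).mpr hcone
  calc |∑' n, f n| ≤ 1 / √d * (r ^ 2) ^ ⌈d⌉₊ / (1 - r ^ 2) :=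
        abs_tsum_le_of_abs_le_geometric (by positivity) (by nlinarith)
          (fun n hn => hzero n (Nat.lt_ceil.mp hn))
          (fun n hn => (hf n).trans (pow_div_factorial_le_geometric hτ hd hcone.le
            (Nat.ceil_le.mp hn) (by omega)))
    _ ≤ 1 / √d * r ^ (2 * d) / (1 - r ^ 2) := by
        have : 0 < 1 - r ^ 2 := by nlinarith
        gcongr
        exact pow_ceil_le_rpow hr0 hr1.le hd.le
    _ = r ^ (2 * d) / (√d * (1 - r ^ 2)) := by rw [one_div_mul_eq_div, div_div]

end

theorem lieb_robinson_P_one_causal_cone_general {V : Type*} [Fintype V] [DecidableEq V]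
    (G : SimpleGraph V) (hconn : G.Connected) (R : ℕ)
    (X : Matrix V V ℝ)
    (hXloc : ∀ i j : V, R < G.dist i j → X i j = 0)
    (i j : V) (t : ℝ)
    (hcone : Real.exp 1 * (Real.sqrt (l2OpNorm X) * |t|) < 2 * ((G.dist i j : ℝ) / R)) :
    let τ : ℝ := Real.sqrt (l2OpNorm X) * |t|
    let d : ℝ := (G.dist i j : ℝ) / R
    let B : ℝ := (Real.exp 1 * τ / (2 * d)) ^ (2 * d) /
      (Real.sqrt d * (1 - (Real.exp 1 * τ / (2 * d)) ^ 2))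
    Real.sqrt (l2OpNorm X) * |Cxx X i j t| ≤ B ∧
    |Cxp X i j t| ≤ B ∧ |Cpx X i j t| ≤ B := by
  intro τ d B
  have hzero : ∀ n : ℕ, n < d → (X ^ n) i j = 0 := fun n hn => by
    rcases R.eq_zero_or_pos with rfl | hR
    · exact absurd hn (by simp [d]) -- `d = 0` when `R = 0`, by division by zero
    · exact hconn.pow_apply_eq_zero_of_mul_lt_dist hXloc n
        (by exact_mod_cast (lt_div_iff₀ (by exact_mod_cast hR)).mp hn)
  have hbound (e : ℕ) : |∑' n, √(l2OpNorm X) ^ e *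
      ((-1) ^ n * t ^ (2 * n + e) * (X ^ n) i j / (2 * n + e).factorial)| ≤ B :=
    abs_tsum_le_causalConeBound (by positivity) hcone e (fun n hn => by simp [hzero n hn])
      (abs_sqrt_pow_mul_coeff_le X i j t e)
  refine ⟨?_, ?_, ?_⟩
  · simpa [Cxx, tsum_mul_left, abs_mul, abs_of_nonneg (Real.sqrt_nonneg _)] using hbound 1
  · simpa [Cxp] using hbound 0
  · simpa [Cpx] using hbound 0

/-- **Causal cone for `P = 𝟙`.** If `e·τ < 2·d_{i,j}` with `d_{i,j} = dist(i,j)/R` and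
`τ = √‖X‖·|t|`, then with `B = (eτ/(2d))^{2d} / (√d · (1 − (eτ/(2d))²))` one has
`√‖X‖·|C^{xx}| ≤ B`, `|C^{xp}| ≤ B` and `|C^{px}| ≤ B`. -/
theorem lieb_robinson_P_one_causal_cone {V : Type*} [Fintype V] [DecidableEq V]
    (G : SimpleGraph V) (hconn : G.Connected) (R : ℕ) (hR : 1 ≤ R)
    (X : Matrix V V ℝ) (hX : X.IsSymm)
    (hXloc : ∀ i j : V, R < G.dist i j → X i j = 0)
    (i j : V) (t : ℝ)
    (hcone : Real.exp 1 * (Real.sqrt (l2OpNorm X) * |t|) < 2 * ((G.dist i j : ℝ) / R)) :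
    let τ : ℝ := Real.sqrt (l2OpNorm X) * |t|
    let d : ℝ := (G.dist i j : ℝ) / R
    let B : ℝ := (Real.exp 1 * τ / (2 * d)) ^ (2 * d) /
      (Real.sqrt d * (1 - (Real.exp 1 * τ / (2 * d)) ^ 2))
    Real.sqrt (l2OpNorm X) * |Cxx X i j t| ≤ B ∧
    |Cxp X i j t| ≤ B ∧ |Cpx X i j t| ≤ B :=
  lieb_robinson_P_one_causal_cone_general G hconn R X hXloc i j t hcone
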